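/- arXiv:1605.05913 — 3 statements merged into one kernel-verified Lean document; each statement's English description precedes it below -/
import Mathlib

section
/- Let δ > 0, C > 0, α > 0, and let f : (0,δ) → ℝ be differentiable with |x·f'(x)| ≤ C·x^α for all x ∈ (0,δ). Let φ(x) = exp(x − 1/x) and choose ε > 0 with φ(ε) ≤ δ. Then the function g = f ∘ φ on (0,ε) satisfies |g'(x)| ≤ C·φ(x)^α·(1 + x^{-2}) for all x ∈ (0,ε), and g'(x) → 0 as x → 0⁺. -/
/-!
Write `φ x = exp (x - x⁻¹)`. Since `φ' = (1 + x⁻²) φ`, the chain rule gives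
`(f ∘ φ)' x = (y f' y) (1 + x⁻²)` with `y = φ x`, so the decay hypothesis bounds it by
`C φ(x)^α (1 + x⁻²) = C exp (α x) · exp (-α t) (1 + t²)` with `t = x⁻¹`, and the exponential
decay in `t → ∞` beats the quadratic growth.
-/

open Real Filter Topology Set

noncomputable def gluingProfile (x : ℝ) : ℝ := exp (x - x⁻¹)

lemma gluingProfile_pos (x : ℝ) : 0 < gluingProfile x := exp_pos _

lemma gluingProfile_lt_gluingProfile {x y : ℝ} (hx : 0 < x) (hxy : x < y) :
    gluingProfile x < gluingProfile y := by
  have : y⁻¹ < x⁻¹ := inv_strictAnti₀ hx hxy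
  exact exp_lt_exp.2 (by linarith)

lemma hasDerivAt_gluingProfile {x : ℝ} (hx : x ≠ 0) :
    HasDerivAt gluingProfile (gluingProfile x * (1 + x⁻¹ ^ 2)) x := by
  have h : HasDerivAt (fun y => y - y⁻¹) (1 + x⁻¹ ^ 2) x := by
    simpa using (hasDerivAt_id' x).fun_sub (hasDerivAt_inv hx)
  exact h.exp

lemma gluingProfile_rpow (x α : ℝ) :
    gluingProfile x ^ α = exp (α * x) * exp (-α * x⁻¹) := by
  rw [gluingProfile, ← exp_mul, ← exp_add]
  ring_nf

lemma tendsto_exp_neg_mul_mul_one_add_sq_atTop {α : ℝ} (hα : 0 < α) :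
    Tendsto (fun t : ℝ => exp (-α * t) * (1 + t ^ 2)) atTop (𝓝 0) := by
  have h := (tendsto_rpow_mul_exp_neg_mul_atTop_nhds_zero 0 α hα).add
    (tendsto_rpow_mul_exp_neg_mul_atTop_nhds_zero 2 α hα)
  rw [add_zero] at h
  refine h.congr fun t => ?_
  rw [rpow_zero, rpow_two]
  ring

lemma tendsto_gluingProfile_rpow_mul_one_add_inv_sq {α : ℝ} (hα : 0 < α) :
    Tendsto (fun x : ℝ => gluingProfile x ^ α * (1 + x⁻¹ ^ 2)) (𝓝[>] 0) (𝓝 0) := by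
  have hexp : Tendsto (fun x : ℝ => exp (α * x)) (𝓝[>] 0) (𝓝 1) := by
    simpa using ((continuous_const.mul continuous_id).rexp.tendsto 0).mono_left
      nhdsWithin_le_nhds
  have hdecay := (tendsto_exp_neg_mul_mul_one_add_sq_atTop hα).comp tendsto_inv_nhdsGT_zero
  have h := hexp.mul hdecay
  rw [one_mul] at h
  refine h.congr fun x => ?_
  rw [Function.comp_apply, gluingProfile_rpow]
  ring

lemma deriv_comp_gluingProfile (f : ℝ → ℝ) {x : ℝ} (hx : x ≠ 0)
    (hf : DifferentiableAt ℝ f (gluingProfile x)) :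
    deriv (fun y => f (gluingProfile y)) x
      = gluingProfile x * deriv f (gluingProfile x) * (1 + x⁻¹ ^ 2) := by
  rw [← Function.comp_def, (hf.hasDerivAt.comp x (hasDerivAt_gluingProfile hx)).deriv]
  ring

lemma abs_deriv_comp_gluingProfile_le (f : ℝ → ℝ) {C α x : ℝ} (hx : x ≠ 0)
    (hf : DifferentiableAt ℝ f (gluingProfile x))
    (hfd : |gluingProfile x * deriv f (gluingProfile x)| ≤ C * gluingProfile x ^ α) :
    |deriv (fun y => f (gluingProfile y)) x| ≤ C * gluingProfile x ^ α * (1 + x⁻¹ ^ 2) := by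
  have hpos : (0 : ℝ) < 1 + x⁻¹ ^ 2 := by positivity
  rw [deriv_comp_gluingProfile f hx hf, abs_mul, abs_of_pos hpos]
  gcongr

theorem stmt8_general (δ C α ε : ℝ) (hα : 0 < α) (hε : 0 < ε)
    (f : ℝ → ℝ) (hf : ∀ x ∈ Set.Ioo (0:ℝ) δ, DifferentiableAt ℝ f x)
    (hfd : ∀ x ∈ Set.Ioo (0:ℝ) δ, |x * deriv f x| ≤ C * x ^ α)
    (hεδ : Real.exp (ε - ε⁻¹) ≤ δ) :
    (∀ x ∈ Set.Ioo (0:ℝ) ε,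
      |deriv (fun y => f (Real.exp (y - y⁻¹))) x|
        ≤ C * (Real.exp (x - x⁻¹)) ^ α * (1 + x⁻¹ ^ 2)) ∧
    Filter.Tendsto (fun x => deriv (fun y => f (Real.exp (y - y⁻¹))) x)
      (nhdsWithin 0 (Set.Ioi 0)) (nhds 0) := by
  have hmaps : ∀ x ∈ Ioo 0 ε, gluingProfile x ∈ Ioo 0 δ := fun x hx =>
    ⟨gluingProfile_pos x, (gluingProfile_lt_gluingProfile hx.1 hx.2).trans_le hεδ⟩
  have hbound : ∀ x ∈ Ioo 0 ε, |deriv (fun y => f (gluingProfile y)) x|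
      ≤ C * gluingProfile x ^ α * (1 + x⁻¹ ^ 2) := fun x hx =>
    abs_deriv_comp_gluingProfile_le f hx.1.ne' (hf _ (hmaps x hx)) (hfd _ (hmaps x hx))
  have hmajorant :
      Tendsto (fun x => C * gluingProfile x ^ α * (1 + x⁻¹ ^ 2)) (𝓝[>] 0) (𝓝 0) := by
    simpa [mul_assoc] using (tendsto_gluingProfile_rpow_mul_one_add_inv_sq hα).const_mul C
  refine ⟨hbound, squeeze_zero_norm' ?_ hmajorant⟩
  filter_upwards [Ioo_mem_nhdsGT hε] with x hx using hbound x hx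

/-- If `f : (0,δ) → ℝ` is differentiable with `|x * f' x| ≤ C * x ^ α` on `(0,δ)`, and
`φ x = exp (x - 1/x)` with `φ ε ≤ δ`, then `g = f ∘ φ` satisfies
`|g' x| ≤ C * φ x ^ α * (1 + x⁻²)` on `(0,ε)`, and `g' x → 0` as `x → 0⁺`. -/
theorem stmt8 (δ C α ε : ℝ) (hδ : 0 < δ) (hC : 0 < C) (hα : 0 < α) (hε : 0 < ε)
    (f : ℝ → ℝ) (hf : ∀ x ∈ Set.Ioo (0:ℝ) δ, DifferentiableAt ℝ f x)
    (hfd : ∀ x ∈ Set.Ioo (0:ℝ) δ, |x * deriv f x| ≤ C * x ^ α)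
    (hεδ : Real.exp (ε - ε⁻¹) ≤ δ) :
    (∀ x ∈ Set.Ioo (0:ℝ) ε,
      |deriv (fun y => f (Real.exp (y - y⁻¹))) x|
        ≤ C * (Real.exp (x - x⁻¹)) ^ α * (1 + x⁻¹ ^ 2)) ∧
    Filter.Tendsto (fun x => deriv (fun y => f (Real.exp (y - y⁻¹))) x)
      (nhdsWithin 0 (Set.Ioi 0)) (nhds 0) :=
  stmt8_general δ C α ε hα hε f hf hfd hεδ
end

section
/- Let φ(x) = exp(x − 1/x) and ψ(x) = (1/2)(log x + √((log x)² + 4)) for x > 0, and define g̃(x,y) = ψ(φ(x)·φ(y)) for x, y > 0. Then g̃(x,y)·(x + y)/(x·y) → 1 as (x,y) → (0,0) with x, y > 0. -/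
/-!
Put `u = log (φ x * φ y) = x - x⁻¹ + (y - y⁻¹)`. Then `-u = (x + y) (1 - x y) / (x y)`, so the
quantity equals `((u + √(u² + 4)) / 2) · (-u) / (1 - x y)`. As `x, y → 0⁺` we have `u → -∞` and
`x y → 0`, and `(u + √(u² + 4)) / 2 = 2 / (√(u² + 4) - u)` is asymptotic to `-1/u` as `u → -∞`.
-/

open Real Filter Set Topology

lemma tendsto_sub_inv_nhdsGT_zero_atBot :
    Tendsto (fun x : ℝ => x - x⁻¹) (𝓝[>] 0) atBot := by
  simpa [sub_eq_add_neg] using (tendsto_id.mono_left nhdsWithin_le_nhds).add_atBot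
    (tendsto_neg_atTop_atBot.comp tendsto_inv_nhdsGT_zero)

lemma add_sqrt_sq_add_four_div_two_mul_neg {u : ℝ} (hu : u < 0) :
    (u + √(u ^ 2 + 4)) / 2 * -u = 2 / (1 + √(1 + 4 / u ^ 2)) := by
  set s := √(1 + 4 / u ^ 2)
  have hsq : u ^ 2 * s ^ 2 = u ^ 2 + 4 := by
    rw [sq_sqrt (by positivity)]
    field_simp [hu.ne]
  have hS : √(u ^ 2 + 4) = -u * s := by
    rw [← hsq, sqrt_mul (sq_nonneg u), sqrt_sq_eq_abs, abs_of_neg hu, sqrt_sq (sqrt_nonneg _)]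
  rw [hS, eq_div_iff (by positivity)]
  linear_combination (1 / 2 : ℝ) * hsq

lemma tendsto_add_sqrt_sq_add_four_div_two_mul_neg_atBot :
    Tendsto (fun u : ℝ => (u + √(u ^ 2 + 4)) / 2 * -u) atBot (𝓝 1) := by
  have h : Tendsto (fun u : ℝ => 2 / (1 + √(1 + 4 / u ^ 2))) atBot
      (𝓝 (2 / (1 + √(1 + 4 * 0)))) := by
    refine tendsto_const_nhds.div (tendsto_const_nhds.add ?_) (by positivity)
    refine (continuous_sqrt.tendsto _).comp (tendsto_const_nhds.add ?_)
    simpa [div_eq_mul_inv] using ((tendsto_pow_atTop two_ne_zero).comp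
      tendsto_neg_atBot_atTop).inv_tendsto_atTop.const_mul (4 : ℝ)
  norm_num at h
  exact h.congr' <| (eventually_lt_atBot 0).mono fun u hu =>
    (add_sqrt_sq_add_four_div_two_mul_neg hu).symm

lemma add_div_mul_eq_neg_sub_inv_add_sub_inv_div {x y : ℝ} (hx : x ≠ 0) (hy : y ≠ 0)
    (hxy : x * y ≠ 1) :
    (x + y) / (x * y) = -(x - x⁻¹ + (y - y⁻¹)) / (1 - x * y) := by
  rw [eq_div_iff (sub_ne_zero.mpr hxy.symm)]
  field_simp
  ring

/-- With `φ x = exp (x - 1/x)` and `ψ x = (log x + √((log x)² + 4))/2`, the function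
`g̃ (x,y) = ψ (φ x * φ y)` satisfies `g̃ (x,y) * (x + y) / (x * y) → 1` as
`(x,y) → (0,0)` with `x, y > 0`. -/
theorem stmt10 :
    Filter.Tendsto (fun p : ℝ × ℝ =>
      ((Real.log (Real.exp (p.1 - p.1⁻¹) * Real.exp (p.2 - p.2⁻¹)) +
        Real.sqrt ((Real.log (Real.exp (p.1 - p.1⁻¹) * Real.exp (p.2 - p.2⁻¹))) ^ 2 + 4)) / 2)
        * (p.1 + p.2) / (p.1 * p.2))
      (nhdsWithin ((0, 0) : ℝ × ℝ) (Set.Ioi 0 ×ˢ Set.Ioi 0)) (nhds 1) := by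
  let u (p : ℝ × ℝ) : ℝ := p.1 - p.1⁻¹ + (p.2 - p.2⁻¹)
  have hu : Tendsto u (𝓝[Ioi 0 ×ˢ Ioi 0] (0, 0)) atBot := by
    rw [nhdsWithin_prod_eq]
    exact (tendsto_sub_inv_nhdsGT_zero_atBot.comp tendsto_fst).atBot_add_atBot
      (tendsto_sub_inv_nhdsGT_zero_atBot.comp tendsto_snd)
  have hxy : Tendsto (fun p : ℝ × ℝ => p.1 * p.2) (𝓝[Ioi 0 ×ˢ Ioi 0] (0, 0)) (𝓝 0) := by
    simpa using ((continuous_fst.tendsto _).mul (continuous_snd.tendsto _)).mono_left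
      (nhdsWithin_le_nhds (a := ((0 : ℝ), (0 : ℝ))))
  have hlim : Tendsto (fun p => (u p + √(u p ^ 2 + 4)) / 2 * -u p / (1 - p.1 * p.2))
      (𝓝[Ioi 0 ×ˢ Ioi 0] (0, 0)) (𝓝 (1 / (1 - 0))) :=
    (tendsto_add_sqrt_sq_add_four_div_two_mul_neg_atBot.comp hu).div
      (tendsto_const_nhds.sub hxy) (by norm_num)
  rw [sub_zero, div_one] at hlim
  refine hlim.congr' ?_
  filter_upwards [self_mem_nhdsWithin, hxy.eventually (gt_mem_nhds one_pos)]
    with p ⟨hx, hy⟩ hxy1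
  rw [← exp_add, log_exp, mul_div_assoc _ (p.1 + p.2),
    add_div_mul_eq_neg_sub_inv_add_sub_inv_div hx.ne' hy.ne' hxy1.ne, mul_div_assoc]
end

section
/- Let c : (0,1) → ℝ be differentiable and bounded on (0,1/2), and suppose x·c'(x) → L as x → 0⁺ for some real L. Then L = 0. -/
/-! If `x * c' x ≥ k > 0` near `0⁺`, then `c - k log` is monotone there, so
`c x ≤ C + k log x → -∞`; a bounded `c` therefore forces `x * c' x → 0`. -/

open Filter Set Topology Real

theorem monotoneOn_sub_mul_log_of_le_mul_deriv {c : ℝ → ℝ} {k b : ℝ}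
    (hdiff : ∀ x ∈ Ioo 0 b, DifferentiableAt ℝ c x)
    (hderiv : ∀ x ∈ Ioo 0 b, k ≤ x * deriv c x) :
    MonotoneOn (fun x => c x - k * log x) (Ioo 0 b) := by
  have hlog : ∀ x ∈ Ioo (0 : ℝ) b, DifferentiableAt ℝ log x := fun x hx =>
    differentiableAt_log hx.1.ne'
  have hφ : ∀ x ∈ Ioo (0 : ℝ) b, DifferentiableAt ℝ (fun x => c x - k * log x) x :=
    fun x hx => (hdiff x hx).sub ((hlog x hx).const_mul k)
  refine monotoneOn_of_deriv_nonneg (convex_Ioo 0 b)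
    (fun x hx => (hφ x hx).continuousAt.continuousWithinAt)
    (fun x hx => (hφ x (interior_subset hx)).differentiableWithinAt) fun x hx => ?_
  rw [interior_Ioo] at hx
  rw [deriv_fun_sub (hdiff x hx) ((hlog x hx).const_mul k), deriv_const_mul _ (hlog x hx),
    deriv_log, sub_nonneg, ← div_eq_mul_inv, div_le_iff₀ hx.1, mul_comm]
  exact hderiv x hx

theorem tendsto_nhdsGT_zero_atBot_of_le_mul_deriv {c : ℝ → ℝ} {k : ℝ} (hk : 0 < k)
    (hdiff : ∀ᶠ x in 𝓝[>] 0, DifferentiableAt ℝ c x)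
    (hderiv : ∀ᶠ x in 𝓝[>] 0, k ≤ x * deriv c x) :
    Tendsto c (𝓝[>] 0) atBot := by
  obtain ⟨b, hb, hsub⟩ := mem_nhdsGT_iff_exists_Ioo_subset.1 (hdiff.and hderiv)
  have hmono := monotoneOn_sub_mul_log_of_le_mul_deriv (fun x hx => (hsub hx).1)
    (fun x hx => (hsub hx).2)
  obtain ⟨y, hy⟩ : (Ioo 0 b).Nonempty := nonempty_Ioo.2 hb
  have hle : ∀ᶠ x in 𝓝[>] 0, c x ≤ (c y - k * log y) + k * log x := by
    filter_upwards [Ioo_mem_nhdsGT hy.1] with x hx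
    have := hmono ⟨hx.1, hx.2.trans hy.2⟩ hy hx.2.le
    linarith
  exact tendsto_atBot_mono' _ hle <|
    tendsto_atBot_add_const_left _ _ (tendsto_log_nhdsGT_zero.const_mul_atBot hk)

theorem tendsto_nhdsGT_zero_atBot_of_tendsto_mul_deriv {c : ℝ → ℝ} {L : ℝ} (hL : 0 < L)
    (hdiff : ∀ᶠ x in 𝓝[>] 0, DifferentiableAt ℝ c x)
    (hlim : Tendsto (fun x => x * deriv c x) (𝓝[>] 0) (𝓝 L)) :
    Tendsto c (𝓝[>] 0) atBot :=
  tendsto_nhdsGT_zero_atBot_of_le_mul_deriv (half_pos hL) hdiff <|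
    (hlim.eventually (lt_mem_nhds (half_lt_self hL))).mono fun _ hx => hx.le

theorem tendsto_abs_nhdsGT_zero_atTop_of_tendsto_mul_deriv {c : ℝ → ℝ} {L : ℝ} (hL : L ≠ 0)
    (hdiff : ∀ᶠ x in 𝓝[>] 0, DifferentiableAt ℝ c x)
    (hlim : Tendsto (fun x => x * deriv c x) (𝓝[>] 0) (𝓝 L)) :
    Tendsto (fun x => |c x|) (𝓝[>] 0) atTop := by
  rcases hL.lt_or_gt with hL | hL
  · have hneg : Tendsto (fun x => x * deriv (fun y => -c y) x) (𝓝[>] 0) (𝓝 (-L)) := by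
      simpa only [deriv.fun_neg, mul_neg] using hlim.neg
    have := tendsto_nhdsGT_zero_atBot_of_tendsto_mul_deriv (neg_pos.2 hL)
      (hdiff.mono fun _ hx => hx.neg) hneg
    exact (tendsto_abs_atBot_atTop.comp this).congr fun x => abs_neg (c x)
  · exact tendsto_abs_atBot_atTop.comp
      (tendsto_nhdsGT_zero_atBot_of_tendsto_mul_deriv hL hdiff hlim)

/-- If `c : (0,1) → ℝ` is differentiable, bounded on `(0,1/2)`, and `x * c' x → L` as
`x → 0⁺`, then `L = 0`. -/
theorem stmt15 (c : ℝ → ℝ)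
    (hdiff : ∀ x ∈ Set.Ioo (0:ℝ) 1, DifferentiableAt ℝ c x)
    (hbdd : ∃ M : ℝ, ∀ x ∈ Set.Ioo (0:ℝ) (1/2), |c x| ≤ M)
    (L : ℝ)
    (hlim : Filter.Tendsto (fun x => x * deriv c x)
      (nhdsWithin 0 (Set.Ioi 0)) (nhds L)) :
    L = 0 := by
  by_contra hL
  obtain ⟨M, hM⟩ := hbdd
  have hunbdd := tendsto_abs_nhdsGT_zero_atTop_of_tendsto_mul_deriv hL
    (mem_of_superset (Ioo_mem_nhdsGT one_pos) hdiff) hlim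
  obtain ⟨x, hxM, hx⟩ :=
    ((hunbdd.eventually_gt_atTop M).and (Ioo_mem_nhdsGT (by norm_num : (0 : ℝ) < 1 / 2))).exists
  exact (hxM.trans_le (hM x hx)).false
end
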